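/- The following statement is false: if S_n is a sequence of symplectic 4×4 matrices converging to S, and each S_n admits a splitting of ℝ⁴ into two S_n-invariant Lagrangian planes, then S admits a splitting of ℝ⁴ into two S-invariant Lagrangian planes. (A counterexample is given by S_n = P_{1/n} converging to S = P₀.) -/

import Mathlib

open Matrix

/-- The standard 4×4 symplectic matrix `J = [[0, I₂],[-I₂, 0]]`. -/
noncomputable def Jmat : Matrix (Fin 4) (Fin 4) ℝ :=
  !![0, 0, 1, 0;
     0, 0, 0, 1;
     -1, 0, 0, 0;
     0, -1, 0, 0]

/-- `A_ε = [[1, -ε],[ε, 1]]`. -/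
noncomputable def Aeps (ε : ℝ) : Matrix (Fin 2) (Fin 2) ℝ := !![1, -ε; ε, 1]

/-- `B_ε = [[1, -ε],[0, 0]]`. -/
noncomputable def Beps (ε : ℝ) : Matrix (Fin 2) (Fin 2) ℝ := !![1, -ε; 0, 0]

/-- `C_ε = (1/(1+ε²))·[[1, -ε],[ε, 1]]`. -/
noncomputable def Ceps (ε : ℝ) : Matrix (Fin 2) (Fin 2) ℝ :=
  !![1 / (1 + ε ^ 2), -ε / (1 + ε ^ 2); ε / (1 + ε ^ 2), 1 / (1 + ε ^ 2)]

/-- `P_ε = [[A_ε, B_ε],[0, C_ε]]` written out as a 4×4 matrix. -/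
noncomputable def Peps (ε : ℝ) : Matrix (Fin 4) (Fin 4) ℝ :=
  !![1, -ε, 1, -ε;
     ε, 1, 0, 0;
     0, 0, 1 / (1 + ε ^ 2), -ε / (1 + ε ^ 2);
     0, 0, ε / (1 + ε ^ 2), 1 / (1 + ε ^ 2)]

/-- A matrix `S` admits an `S`-invariant Lagrangian splitting of `ℝ⁴`. -/
def HasInvariantLagrangianSplitting (S : Matrix (Fin 4) (Fin 4) ℝ) : Prop :=
  ∃ U V : Submodule ℝ (Fin 4 → ℝ),
    Module.finrank ℝ U = 2 ∧ Module.finrank ℝ V = 2 ∧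
    IsCompl U V ∧
    (∀ u₁ ∈ U, ∀ u₂ ∈ U, u₁ ⬝ᵥ Jmat.mulVec u₂ = 0) ∧
    (∀ w₁ ∈ V, ∀ w₂ ∈ V, w₁ ⬝ᵥ Jmat.mulVec w₂ = 0) ∧
    (∀ u ∈ U, S.mulVec u ∈ U) ∧
    (∀ w ∈ V, S.mulVec w ∈ V)

/-!
For `ε ≠ 0`, `P_ε` preserves the horizontal plane `{x₂ = x₃ = 0}` and the graph `{(M z, z)}` of
a symmetric `2 × 2` matrix `M`; both planes are Lagrangian and together they span `ℝ⁴`.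
At `ε = 0`, however, `P₀ u - u = u₂ e₀` and `ω(u₂ e₀, u) = u₂²`, so an isotropic
`P₀`-invariant plane containing `u` forces `u₂ = 0`. Two such planes lie in `{x₂ = 0}` and
cannot span `ℝ⁴`.
-/

section FiniteDimensional

variable {K V : Type*} [DivisionRing K] [AddCommGroup V] [Module K V]

theorem finrank_span_pair_le (x y : V) :
    Module.finrank K (Submodule.span K ({x, y} : Set V)) ≤ 2 := by
  classical
  have := (finrank_span_finset_le_card (R := K) ({x, y} : Finset V)).trans Finset.card_le_two
  rwa [Set.finrank, Finset.coe_insert, Finset.coe_singleton] at this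

theorem finrank_eq_of_isCompl_of_finrank_le [FiniteDimensional K V] {U W : Submodule K V}
    (h : IsCompl U W) {m n : ℕ} (hV : Module.finrank K V = m + n)
    (hU : Module.finrank K U ≤ m) (hW : Module.finrank K W ≤ n) :
    Module.finrank K U = m ∧ Module.finrank K W = n := by
  have := Submodule.finrank_add_eq_of_isCompl h
  omega

end FiniteDimensional

theorem dotProduct_Jmat_mulVec (x y : Fin 4 → ℝ) :
    x ⬝ᵥ Jmat *ᵥ y = x 0 * y 2 + x 1 * y 3 - x 2 * y 0 - x 3 * y 1 := by
  simp [Jmat, mulVec, dotProduct, Fin.sum_univ_four]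
  ring

theorem Peps_mulVec (ε : ℝ) (w : Fin 4 → ℝ) :
    Peps ε *ᵥ w = ![w 0 - ε * w 1 + w 2 - ε * w 3, ε * w 0 + w 1,
      (w 2 - ε * w 3) / (1 + ε ^ 2), (ε * w 2 + w 3) / (1 + ε ^ 2)] := by
  ext i
  fin_cases i <;> simp [Peps, mulVec, dotProduct, Fin.sum_univ_four] <;> ring

theorem Peps_transpose_mul_Jmat_mul_self (ε : ℝ) : (Peps ε)ᵀ * Jmat * Peps ε = Jmat := by
  have hk : (1:ℝ) + ε ^ 2 ≠ 0 := by positivity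
  ext i j
  fin_cases i <;> fin_cases j <;>
    simp [Peps, Jmat, Matrix.mul_apply, Fin.sum_univ_four] <;> field_simp <;> ring

theorem continuous_Peps : Continuous Peps := by
  refine continuous_pi fun i => continuous_pi fun j => ?_
  fin_cases i <;> fin_cases j <;> simp [Peps] <;> fun_prop (disch := intros; positivity)

def IsIsotropic (U : Submodule ℝ (Fin 4 → ℝ)) : Prop :=
  ∀ u₁ ∈ U, ∀ u₂ ∈ U, u₁ ⬝ᵥ Jmat *ᵥ u₂ = 0

noncomputable def horizontalPlane : Submodule ℝ (Fin 4 → ℝ) :=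
  Submodule.span ℝ {![1, 0, 0, 0], ![0, 1, 0, 0]}

/-- The graph `{(M z, z)}` of the symmetric matrix `M = [[a, b], [b, d]]`. -/
noncomputable def symmGraphPlane (a b d : ℝ) : Submodule ℝ (Fin 4 → ℝ) :=
  Submodule.span ℝ {![a, b, 1, 0], ![b, d, 0, 1]}

theorem mem_horizontalPlane {x : Fin 4 → ℝ} : x ∈ horizontalPlane ↔ x 2 = 0 ∧ x 3 = 0 := by
  rw [horizontalPlane, Submodule.mem_span_pair]
  constructor
  · rintro ⟨s, t, rfl⟩
    simp
  · rintro ⟨h2, h3⟩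
    exact ⟨x 0, x 1, by ext i; fin_cases i <;> simp [h2, h3]⟩

theorem mem_symmGraphPlane {a b d : ℝ} {x : Fin 4 → ℝ} :
    x ∈ symmGraphPlane a b d ↔ x 0 = a * x 2 + b * x 3 ∧ x 1 = b * x 2 + d * x 3 := by
  rw [symmGraphPlane, Submodule.mem_span_pair]
  constructor
  · rintro ⟨s, t, rfl⟩
    constructor <;> simp <;> ring
  · rintro ⟨h0, h1⟩
    exact ⟨x 2, x 3, by ext i; fin_cases i <;> simp <;> linarith⟩

theorem isIsotropic_horizontalPlane : IsIsotropic horizontalPlane := by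
  intro x hx y hy
  rw [mem_horizontalPlane] at hx hy
  rw [dotProduct_Jmat_mulVec, hx.1, hx.2, hy.1, hy.2]
  ring

theorem isIsotropic_symmGraphPlane (a b d : ℝ) : IsIsotropic (symmGraphPlane a b d) := by
  intro x hx y hy
  rw [mem_symmGraphPlane] at hx hy
  rw [dotProduct_Jmat_mulVec, hx.1, hx.2, hy.1, hy.2]
  ring

theorem isCompl_horizontalPlane_symmGraphPlane (a b d : ℝ) :
    IsCompl horizontalPlane (symmGraphPlane a b d) := by
  constructor
  · rw [Submodule.disjoint_def]
    intro x hxH hxG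
    rw [mem_horizontalPlane] at hxH
    rw [mem_symmGraphPlane, hxH.1, hxH.2] at hxG
    ext i
    fin_cases i <;> simp [hxH, hxG]
  · rw [codisjoint_iff, Submodule.eq_top_iff']
    intro x
    have hg : x 2 • ![a, b, 1, 0] + x 3 • ![b, d, 0, 1] ∈ symmGraphPlane a b d :=
      Submodule.mem_span_pair.mpr ⟨x 2, x 3, rfl⟩
    refine Submodule.mem_sup.mpr ⟨_, ?_, _, hg, sub_add_cancel x _⟩
    rw [mem_horizontalPlane]
    simp

theorem hasInvariantLagrangianSplitting_of_mapsTo {S : Matrix (Fin 4) (Fin 4) ℝ} {a b d : ℝ}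
    (hH : ∀ x ∈ horizontalPlane, S *ᵥ x ∈ horizontalPlane)
    (hG : ∀ x ∈ symmGraphPlane a b d, S *ᵥ x ∈ symmGraphPlane a b d) :
    HasInvariantLagrangianSplitting S := by
  have hc := isCompl_horizontalPlane_symmGraphPlane a b d
  obtain ⟨hfH, hfG⟩ := finrank_eq_of_isCompl_of_finrank_le hc (by simp)
    (finrank_span_pair_le _ _) (finrank_span_pair_le _ _)
  exact ⟨_, _, hfH, hfG, hc, isIsotropic_horizontalPlane, isIsotropic_symmGraphPlane a b d, hH, hG⟩

theorem Peps_mulVec_mem_horizontalPlane (ε : ℝ) {x : Fin 4 → ℝ} (hx : x ∈ horizontalPlane) :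
    Peps ε *ᵥ x ∈ horizontalPlane := by
  rw [mem_horizontalPlane] at hx ⊢
  simp [Peps_mulVec, hx.1, hx.2]

/-- The entries solve `A_ε M + B_ε = M C_ε` for symmetric `M = [[a, b], [b, d]]`, which is the
`P_ε`-invariance of the graph of `M`; the solution exists only for `ε ≠ 0`. -/
noncomputable def invariantGraphPlane (ε : ℝ) : Submodule ℝ (Fin 4 → ℝ) :=
  symmGraphPlane (-2 * (1 + ε ^ 2) / (ε ^ 2 * (4 + ε ^ 2)))
    (ε * (1 + ε ^ 2) / (ε ^ 2 * (4 + ε ^ 2)))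
    (-(1 + ε ^ 2) * (2 + ε ^ 2) / (ε ^ 2 * (4 + ε ^ 2)))

theorem Peps_mulVec_mem_invariantGraphPlane {ε : ℝ} (hε : ε ≠ 0) {x : Fin 4 → ℝ}
    (hx : x ∈ invariantGraphPlane ε) : Peps ε *ᵥ x ∈ invariantGraphPlane ε := by
  rw [invariantGraphPlane, mem_symmGraphPlane] at hx ⊢
  rw [Peps_mulVec]
  constructor <;> simp only [hx.1, hx.2, Matrix.cons_val] <;> field_simp <;> ring

theorem hasInvariantLagrangianSplitting_Peps {ε : ℝ} (hε : ε ≠ 0) :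
    HasInvariantLagrangianSplitting (Peps ε) :=
  hasInvariantLagrangianSplitting_of_mapsTo (fun _ => Peps_mulVec_mem_horizontalPlane ε)
    (fun _ => Peps_mulVec_mem_invariantGraphPlane hε)

theorem Peps_zero_mulVec_sub (u : Fin 4 → ℝ) : Peps 0 *ᵥ u - u = ![u 2, 0, 0, 0] := by
  ext i
  fin_cases i <;> simp [Peps_mulVec]

theorem apply_two_eq_zero_of_isIsotropic {U : Submodule ℝ (Fin 4 → ℝ)} (hU : IsIsotropic U)
    (hI : ∀ u ∈ U, Peps 0 *ᵥ u ∈ U) {u : Fin 4 → ℝ} (hu : u ∈ U) : u 2 = 0 := by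
  have hω := hU _ (U.sub_mem (hI u hu) hu) u hu
  rw [Peps_zero_mulVec_sub, dotProduct_Jmat_mulVec] at hω
  simpa using hω

theorem not_hasInvariantLagrangianSplitting_Peps_zero :
    ¬ HasInvariantLagrangianSplitting (Peps 0) := by
  rintro ⟨U, V, -, -, hc, hU, hV, hIU, hIV⟩
  obtain ⟨u, hu, v, hv, huv⟩ :=
    Submodule.mem_sup.mp (hc.codisjoint.eq_top ▸ Submodule.mem_top : ![0, 0, 1, 0] ∈ U ⊔ V)
  have := congrFun huv 2
  simp [apply_two_eq_zero_of_isIsotropic hU hIU hu,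
    apply_two_eq_zero_of_isIsotropic hV hIV hv] at this

/-- Lemma 2.5 of Boscaggin–Ortega–Zhao is false: it is not true that invariant
Lagrangian splittings pass to limits of symplectic matrices. -/
theorem stmt16 :
    ¬ (∀ (Sn : ℕ → Matrix (Fin 4) (Fin 4) ℝ) (S : Matrix (Fin 4) (Fin 4) ℝ),
        (∀ n, (Sn n)ᵀ * Jmat * Sn n = Jmat) →
        Filter.Tendsto Sn Filter.atTop (nhds S) →
        (∀ n, HasInvariantLagrangianSplitting (Sn n)) →
        HasInvariantLagrangianSplitting S) := by
  intro h
  exact not_hasInvariantLagrangianSplitting_Peps_zero <|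
    h (fun n => Peps (1 / (n + 1))) (Peps 0) (fun _ => Peps_transpose_mul_Jmat_mul_self _)
      ((continuous_Peps.tendsto 0).comp tendsto_one_div_add_atTop_nhds_zero_nat)
      (fun _ => hasInvariantLagrangianSplitting_Peps (by positivity))
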